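/- If R is a J-clean-like ring, then every nilpotent element of R lies in the Jacobson radical J(R). -/

import Mathlib

/-- An element `p` is potent if `p = p ^ m` for some `m ≥ 2`. -/
def IsPotent {R : Type*} [Ring R] (p : R) : Prop :=
  ∃ m : ℕ, 2 ≤ m ∧ p = p ^ m

/-- `x` lies in the Jacobson radical `J(R)` iff `1 - x * y` is a unit for every `y`. -/
def InJacobson {R : Type*} [Ring R] (x : R) : Prop :=
  ∀ y : R, IsUnit (1 - x * y)

/-- A ring is J-clean-like if every element is the sum of a potent element and an element
of the Jacobson radical. -/
def JCleanLikeRing (R : Type*) [Ring R] : Prop :=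
  ∀ a : R, ∃ p : R, IsPotent p ∧ InJacobson (a - p)

/-!
Modulo the Jacobson radical a nilpotent `x` coincides with a potent `p`. An element that is both
potent and nilpotent is zero, since `p = p ^ m` makes `p ^ (m - 1)` a nilpotent idempotent.
Hence `x` vanishes modulo `J(R)`. The unit-based description of `J(R)` used in the statement
agrees with Mathlib's `Ring.jacobson` by Jacobson's lemma `1 - ab ∈ Rˣ ↔ 1 - ba ∈ Rˣ`.
-/

section

variable {R : Type*} [Ring R]

theorem isUnit_one_sub_mul_comm {a b : R} : IsUnit (1 - a * b) ↔ IsUnit (1 - b * a) := by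
  simpa [spectrum.mem_iff] using
    (spectrum.unit_mem_mul_comm (R := ℤ) (a := a) (b := b) (r := 1)).not

theorem exists_mul_one_sub_eq_one_of_mem_jacobson {a : R} (ha : a ∈ Ring.jacobson R) :
    ∃ z, z * (1 - a) = 1 := by
  rw [← Ideal.jacobson_bot, Ideal.mem_jacobson_iff] at ha
  obtain ⟨z, hz⟩ := ha (-1)
  refine ⟨z, ?_⟩
  rw [← sub_eq_zero, ← Ideal.mem_bot.mp hz]
  noncomm_ring

theorem isUnit_one_sub_of_mem_jacobson {a : R} (ha : a ∈ Ring.jacobson R) : IsUnit (1 - a) := by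
  obtain ⟨z, hz⟩ := exists_mul_one_sub_eq_one_of_mem_jacobson ha
  -- `z = 1 + z * a` with `z * a ∈ J(R)`, so `z` has a left inverse too, which must be `1 - a`.
  have hz' : 1 - -(z * a) = z := by
    rw [← hz]
    noncomm_ring
  obtain ⟨w, hw⟩ := exists_mul_one_sub_eq_one_of_mem_jacobson
    (neg_mem (Ideal.mul_mem_left _ z ha))
  rw [hz'] at hw
  exact ⟨⟨1 - a, z, left_inv_eq_right_inv hw hz ▸ hw, hz⟩, rfl⟩

theorem inJacobson_iff_mem_jacobson {x : R} : InJacobson x ↔ x ∈ Ring.jacobson R := by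
  refine ⟨fun hx => ?_, fun hx y => isUnit_one_sub_of_mem_jacobson (Ideal.mul_mem_right y _ hx)⟩
  rw [← Ideal.jacobson_bot, Ideal.mem_jacobson_iff]
  intro y
  obtain ⟨u, hu⟩ := isUnit_one_sub_mul_comm.mp (hx (-y))
  refine ⟨↑u⁻¹, Ideal.mem_bot.mpr ?_⟩
  calc ↑u⁻¹ * y * x + ↑u⁻¹ - 1 = ↑u⁻¹ * (1 - -y * x) - 1 := by noncomm_ring
    _ = 0 := by rw [← hu, Units.inv_mul, sub_self]

theorem IsPotent.map {S : Type*} [Ring S] (f : R →+* S) {p : R} (hp : IsPotent p) :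
    IsPotent (f p) := by
  obtain ⟨m, hm, hpm⟩ := hp
  exact ⟨m, hm, by rw [← map_pow, ← hpm]⟩

theorem IsPotent.eq_zero_of_isNilpotent {p : R} (hp : IsPotent p) (hn : IsNilpotent p) :
    p = 0 := by
  obtain ⟨m, hm, hpm⟩ := hp
  have hidem : IsIdempotentElem (p ^ (m - 1)) := by
    calc p ^ (m - 1) * p ^ (m - 1) = p ^ (m - 2) * p ^ m := by
          rw [← pow_add, ← pow_add]; congr 1; omega
      _ = p ^ (m - 1) := by
          rw [← hpm, ← pow_succ]; congr 1; omega
  have hzero : p ^ (m - 1) = 0 := hidem.eq_zero_of_isNilpotent (hn.pow_of_pos (by omega))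
  calc p = p ^ (m - 1) * p := by rw [← pow_succ, Nat.sub_add_cancel (by omega), ← hpm]
    _ = 0 := by rw [hzero, zero_mul]

theorem Ideal.mem_of_isNilpotent_of_isPotent_of_sub_mem (I : Ideal R) [I.IsTwoSided] {x p : R}
    (hx : IsNilpotent x) (hp : IsPotent p) (hxp : x - p ∈ I) : x ∈ I := by
  have hmk : Ideal.Quotient.mk I x = Ideal.Quotient.mk I p := Ideal.Quotient.eq.mpr hxp
  have hp0 : Ideal.Quotient.mk I p = 0 :=
    (hp.map _).eq_zero_of_isNilpotent (hmk ▸ hx.map _)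
  rwa [← hmk, Ideal.Quotient.eq_zero_iff_mem] at hp0

end

theorem nilpotent_mem_jacobson_of_jCleanLike {R : Type*} [Ring R]
    (hR : JCleanLikeRing R) (x : R) (hx : IsNilpotent x) : InJacobson x := by
  obtain ⟨p, hp, hxp⟩ := hR x
  rw [inJacobson_iff_mem_jacobson] at hxp ⊢
  exact (Ring.jacobson R).mem_of_isNilpotent_of_isPotent_of_sub_mem hx hp hxp
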